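/- For a set A of k ≥ 2 elements, the reduced Euler characteristic of the simplicial complex M(A) of non-connected graphs on vertex set A equals (-1)^{k-1}(k-1)!. -/
import Mathlib


open scoped Classical

set_option linter.unusedSectionVars false
set_option linter.unusedVariables false

open Finset SimpleGraph

noncomputable def allE (V : Type*) [Fintype V] [DecidableEq V] : Finset (Sym2 V) :=
  Finset.univ.filter (fun e => ¬ e.IsDiag)

noncomputable def csum (V : Type*) [Fintype V] [DecidableEq V] : ℤ :=
  ∑ σ ∈ (allE V).powerset.filter
      (fun σ : Finset (Sym2 V) => (SimpleGraph.fromEdgeSet (σ : Set (Sym2 V))).Connected),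
    (-1 : ℤ) ^ σ.card

variable {V W : Type*} [Fintype V] [DecidableEq V] [Fintype W] [DecidableEq W]

/-- Lemma A: sets closed under adjacency are closed under reachability. -/
lemma reach_closed {G : SimpleGraph V} {S : Set V}
    (h : ∀ a b, G.Adj a b → a ∈ S → b ∈ S) {a b : V}
    (hr : G.Reachable a b) (ha : a ∈ S) : b ∈ S := by
  obtain ⟨w⟩ := hr
  induction w with
  | nil => exact ha
  | cons hadj _ ih => exact ih (h _ _ hadj ha)

/-- Lemma B: a reachability walk starting in `S`, with all crossing edges absent,
only uses edges inside `S`. -/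
lemma reach_filter {σ : Finset (Sym2 V)} {S : Set V}
    (hcross : ∀ a b : V, s(a,b) ∈ σ → a ≠ b → a ∈ S → b ∈ S) {a b : V}
    (ha : a ∈ S) (hr : (fromEdgeSet (σ : Set (Sym2 V))).Reachable a b) :
    (fromEdgeSet ((σ.filter (fun e => ∀ x ∈ e, x ∈ S) : Finset (Sym2 V)) : Set (Sym2 V))).Reachable a b := by
  obtain ⟨w⟩ := hr
  induction w with
  | nil => exact Reachable.refl _
  | @cons u v _ hadj _ ih =>
      rw [fromEdgeSet_adj] at hadj
      have hv : v ∈ S := hcross u v hadj.1 hadj.2 ha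
      have hmem : s(u,v) ∈ σ.filter (fun e => ∀ x ∈ e, x ∈ S) := by
        refine Finset.mem_filter.2 ⟨hadj.1, ?_⟩
        intro x hx
        rcases Sym2.mem_iff.1 hx with rfl | rfl
        · exact ha
        · exact hv
      have : (fromEdgeSet ((σ.filter (fun e => ∀ x ∈ e, x ∈ S) : Finset (Sym2 V)) : Set (Sym2 V))).Adj u v := by
        rw [fromEdgeSet_adj]; exact ⟨by exact_mod_cast hmem, hadj.2⟩
      exact (this.reachable).trans (ih hv)

/-- reachability transfers along injective maps on finite edge sets -/
lemma reach_image {f : V → W} (hf : Function.Injective f) (τ : Finset (Sym2 V)) (a b : V) :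
    (fromEdgeSet ((τ.image (Sym2.map f) : Finset (Sym2 W)) : Set (Sym2 W))).Reachable (f a) (f b)
      ↔ (fromEdgeSet (τ : Set (Sym2 V))).Reachable a b := by
  constructor
  · intro hr
    obtain ⟨w⟩ := hr
    -- induction on the walk, generalizing the start vertex
    have key : ∀ (x y : W), (fromEdgeSet ((τ.image (Sym2.map f) : Finset (Sym2 W)) : Set (Sym2 W))).Walk x y →
        ∀ a b : V, f a = x → f b = y → (fromEdgeSet (τ : Set (Sym2 V))).Reachable a b := by
      intro x y w
      induction w with
      | nil =>
          intro a b hfa hfb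
          have : a = b := hf (hfa.trans hfb.symm)
          exact this ▸ Reachable.refl _
      | @cons u v _ hadj _ ih =>
          intro a b hfa hfb
          rw [fromEdgeSet_adj] at hadj
          have hmem : s(u,v) ∈ τ.image (Sym2.map f) := by exact_mod_cast hadj.1
          obtain ⟨e, he, heq⟩ := Finset.mem_image.1 hmem
          induction e using Sym2.ind with
          | _ p q =>
            rw [Sym2.map_pair_eq, Sym2.eq_iff] at heq
            rcases heq with ⟨hp, hq⟩ | ⟨hp, hq⟩
            · -- f p = u = f a, f q = v
              have hpa : p = a := hf (hp.trans hfa.symm)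
              have hpq : p ≠ q := fun h => hadj.2 (by rw [← hp, ← hq, h])
              have hadj' : (fromEdgeSet (τ : Set (Sym2 V))).Adj p q := by
                rw [fromEdgeSet_adj]; exact ⟨by exact_mod_cast he, hpq⟩
              exact (hpa ▸ hadj'.reachable).trans (ih q b hq hfb)
            · have hqa : q = a := hf (hq.trans hfa.symm)
              have hpq : q ≠ p := fun h => hadj.2 (by rw [← hq, ← hp, h])
              have hadj' : (fromEdgeSet (τ : Set (Sym2 V))).Adj q p := by
                rw [fromEdgeSet_adj, Sym2.eq_swap]; exact ⟨by exact_mod_cast he, hpq⟩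
              exact (hqa ▸ hadj'.reachable).trans (ih p b hp hfb)
    exact key _ _ w a b rfl rfl
  · intro hr
    refine Reachable.map (G := fromEdgeSet (τ : Set (Sym2 V)))
      ⟨f, ?_⟩ hr
    intro u v huv
    rw [fromEdgeSet_adj] at huv ⊢
    exact ⟨by exact_mod_cast Finset.mem_image.2 ⟨s(u,v), by exact_mod_cast huv.1, Sym2.map_pair_eq f u v⟩,
      fun h => huv.2 (hf h)⟩


lemma adj_image {f : V → W} (hf : Function.Injective f) (σ : Finset (Sym2 V)) (a b : V) :
    (fromEdgeSet ((σ.image (Sym2.map f) : Finset (Sym2 W)) : Set (Sym2 W))).Adj (f a) (f b)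
      ↔ (fromEdgeSet (σ : Set (Sym2 V))).Adj a b := by
  simp only [fromEdgeSet_adj]
  constructor
  · rintro ⟨h1, h2⟩
    have h1' : s(f a, f b) ∈ σ.image (Sym2.map f) := by exact_mod_cast h1
    obtain ⟨x, hx, hxeq⟩ := Finset.mem_image.1 h1'
    have : x = s(a,b) := (Sym2.map.injective hf) (by rw [hxeq, Sym2.map_pair_eq])
    exact ⟨by exact_mod_cast (this ▸ hx), fun h => h2 (congrArg f h)⟩
  · rintro ⟨h1, h2⟩
    refine ⟨?_, fun h => h2 (hf h)⟩
    have : Sym2.map f s(a,b) ∈ σ.image (Sym2.map f) :=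
      Finset.mem_image.2 ⟨s(a,b), by exact_mod_cast h1, rfl⟩
    rw [Sym2.map_pair_eq] at this
    exact_mod_cast this

noncomputable def fesIso (e : V ≃ W) (σ : Finset (Sym2 V)) :
    fromEdgeSet (σ : Set (Sym2 V)) ≃g
      fromEdgeSet ((σ.image (Sym2.map e) : Finset (Sym2 W)) : Set (Sym2 W)) :=
  ⟨e, fun {a b} => adj_image e.injective σ a b⟩

lemma image_symm_image (e : V ≃ W) (σ : Finset (Sym2 V)) :
    (σ.image (Sym2.map e)).image (Sym2.map e.symm) = σ := by
  rw [Finset.image_image]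
  have : (Sym2.map ⇑e.symm ∘ Sym2.map ⇑e) = id := by
    funext x
    induction x using Sym2.ind with
    | _ a b => simp [Sym2.map_pair_eq]
  rw [this, Finset.image_id]

lemma mem_allE_iff {x : Sym2 V} : x ∈ allE V ↔ ¬ x.IsDiag := by
  simp [allE]

lemma image_subset_allE (e : V ≃ W) {σ : Finset (Sym2 V)} (h : σ ⊆ allE V) :
    σ.image (Sym2.map e) ⊆ allE W := by
  intro x hx
  obtain ⟨y, hy, rfl⟩ := Finset.mem_image.1 hx
  rw [mem_allE_iff, Sym2.isDiag_map e.injective]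
  exact mem_allE_iff.1 (h hy)

/-- `csum` is invariant under bijections of the vertex set. -/
lemma csum_equiv (e : V ≃ W) : csum V = csum W := by
  unfold csum
  refine Finset.sum_nbij' (fun σ => σ.image (Sym2.map e)) (fun σ => σ.image (Sym2.map e.symm))
    ?_ ?_ ?_ ?_ ?_
  · intro σ hσ
    rw [Finset.mem_filter, Finset.mem_powerset] at hσ ⊢
    exact ⟨image_subset_allE e hσ.1, (SimpleGraph.Iso.connected_iff (fesIso e σ)).1 hσ.2⟩
  · intro σ hσ
    rw [Finset.mem_filter, Finset.mem_powerset] at hσ ⊢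
    exact ⟨image_subset_allE e.symm hσ.1,
      (SimpleGraph.Iso.connected_iff (fesIso e.symm σ)).1 hσ.2⟩
  · intro σ _; exact image_symm_image e σ
  · intro σ _
    have := image_symm_image e.symm σ
    simpa using this
  · intro σ _
    rw [Finset.card_image_of_injective _ (Sym2.map.injective e.injective)]

section Decomp
variable (v0 : V)

noncomputable def comp (σ : Finset (Sym2 V)) : Finset V :=
  Finset.univ.filter (fun a => (fromEdgeSet (σ : Set (Sym2 V))).Reachable v0 a)

lemma mem_comp {σ : Finset (Sym2 V)} {a : V} :
    a ∈ comp v0 σ ↔ (fromEdgeSet (σ : Set (Sym2 V))).Reachable v0 a := by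
  simp [comp]

noncomputable def Ein (S : Finset V) : Finset (Sym2 V) :=
  (allE V).filter (fun e => ∀ x ∈ e, x ∈ S)

noncomputable def Eout (S : Finset V) : Finset (Sym2 V) :=
  (allE V).filter (fun e => ∀ x ∈ e, x ∉ S)

lemma mem_Eout {S : Finset V} {e : Sym2 V} : e ∈ Eout S ↔ e ∈ allE V ∧ ∀ x ∈ e, x ∉ S := by
  rw [Eout, Finset.mem_filter]

noncomputable def Tset (S : Finset V) : Finset (Finset (Sym2 V)) :=
  (Ein S).powerset.filter
    (fun τ => ∀ a ∈ S, (fromEdgeSet (τ : Set (Sym2 V))).Reachable v0 a)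

/-- edges of a graph do not cross the boundary of the component of `v0`. -/
lemma comp_no_cross {σ : Finset (Sym2 V)} (hσ : σ ⊆ allE V) {a b : V}
    (he : s(a,b) ∈ σ) (hne : a ≠ b) (ha : a ∈ comp v0 σ) : b ∈ comp v0 σ := by
  rw [mem_comp] at ha ⊢
  have hadj : (fromEdgeSet (σ : Set (Sym2 V))).Adj a b := by
    rw [fromEdgeSet_adj]; exact ⟨by exact_mod_cast he, hne⟩
  exact ha.trans hadj.reachable

lemma fiber_eq (S : Finset V) (h0 : v0 ∈ S) :
    ∑ σ ∈ (allE V).powerset.filter (fun σ => comp v0 σ = S), (-1 : ℤ) ^ σ.card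
      = (∑ τ ∈ Tset v0 S, (-1 : ℤ) ^ τ.card) *
        (∑ ρ ∈ (Eout S).powerset, (-1 : ℤ) ^ ρ.card) := by
  rw [Finset.sum_mul_sum, ← Finset.sum_product']
  refine Finset.sum_nbij' (fun σ => (σ.filter (fun e => ∀ x ∈ e, x ∈ S),
      σ.filter (fun e => ∀ x ∈ e, x ∉ S))) (fun p => p.1 ∪ p.2) ?_ ?_ ?_ ?_ ?_
  · -- forward membership
    intro σ hσ
    rw [Finset.mem_filter, Finset.mem_powerset] at hσ
    obtain ⟨hsub, hcomp⟩ := hσ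
    have hcross : ∀ a b : V, s(a,b) ∈ σ → a ≠ b → a ∈ (S : Set V) → b ∈ (S : Set V) := by
      intro a b he hne ha
      have := comp_no_cross v0 hsub he hne (hcomp ▸ (by exact_mod_cast ha))
      exact_mod_cast hcomp ▸ this
    rw [Finset.mem_product]
    constructor
    · -- τ part in Tset
      rw [Tset, Finset.mem_filter, Finset.mem_powerset]
      constructor
      · intro e he
        rw [Finset.mem_filter] at he
        rw [Ein, Finset.mem_filter]
        exact ⟨hsub he.1, he.2⟩
      · intro a haS
        have hreach : (fromEdgeSet (σ : Set (Sym2 V))).Reachable v0 a := by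
          rw [← mem_comp, hcomp]; exact haS
        have := reach_filter (S := (S : Set V)) hcross (by exact_mod_cast h0) hreach
        have hsub2 : (σ.filter (fun e => ∀ x ∈ e, x ∈ (S : Set V)))
            ⊆ σ.filter (fun e => ∀ x ∈ e, x ∈ S) := by
          intro e he
          rw [Finset.mem_filter] at he ⊢
          exact ⟨he.1, fun x hx => by exact_mod_cast he.2 x hx⟩
        exact this.mono (fromEdgeSet_mono (by exact_mod_cast hsub2))
    · rw [Finset.mem_powerset]
      intro e he
      rw [Finset.mem_filter] at he
      rw [Eout, Finset.mem_filter]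
      exact ⟨hsub he.1, he.2⟩
  · -- backward membership
    intro p hp
    rw [Finset.mem_product] at hp
    obtain ⟨hτ, hρ⟩ := hp
    rw [Tset, Finset.mem_filter, Finset.mem_powerset] at hτ
    rw [Finset.mem_powerset] at hρ
    have hτin : ∀ e ∈ p.1, ∀ x ∈ e, x ∈ S := fun e he =>
      (Finset.mem_filter.1 (hτ.1 he)).2
    have hρout : ∀ e ∈ p.2, ∀ x ∈ e, x ∉ S := fun e he =>
      (Finset.mem_filter.1 (hρ he)).2
    rw [Finset.mem_filter, Finset.mem_powerset]
    constructor
    · intro e he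
      rcases Finset.mem_union.1 he with h | h
      · exact (Finset.mem_filter.1 (hτ.1 h)).1
      · exact (Finset.mem_filter.1 (hρ h)).1
    · -- comp of the union is S
      apply Finset.ext
      intro a
      rw [mem_comp]
      constructor
      · intro hreach
        have : a ∈ (S : Set V) := by
          refine reach_closed (S := (S : Set V)) ?_ hreach (by exact_mod_cast h0)
          intro x y hxy hx
          rw [fromEdgeSet_adj] at hxy
          have hmem : s(x,y) ∈ p.1 ∪ p.2 := by exact_mod_cast hxy.1
          rcases Finset.mem_union.1 hmem with h | h
          · exact_mod_cast hτin _ h y (by simp)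
          · exact absurd (by exact_mod_cast hx) (hρout _ h x (by simp))
        exact_mod_cast this
      · intro haS
        have := hτ.2 a haS
        refine this.mono (fromEdgeSet_mono ?_)
        exact_mod_cast Finset.subset_union_left
  · -- left inverse
    intro σ hσ
    rw [Finset.mem_filter, Finset.mem_powerset] at hσ
    obtain ⟨hsub, hcomp⟩ := hσ
    dsimp only
    rw [← Finset.filter_or, Finset.filter_eq_self]
    intro e he
    induction e using Sym2.ind with
    | _ a b =>
      have hne : a ≠ b := by
        have := mem_allE_iff.1 (hsub he)
        simpa [Sym2.isDiag_iff_proj_eq] using this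
      by_cases ha : a ∈ S
      · left
        intro x hx
        rcases Sym2.mem_iff.1 hx with rfl | rfl
        · exact ha
        · have := comp_no_cross v0 hsub he hne (hcomp ▸ ha)
          exact hcomp ▸ this
      · right
        intro x hx hxS
        rcases Sym2.mem_iff.1 hx with rfl | rfl
        · exact ha hxS
        · have hswap : s(x,a) ∈ σ := by rwa [Sym2.eq_swap] at he
          exact ha (hcomp ▸ comp_no_cross v0 hsub hswap hne.symm (hcomp ▸ hxS))
  · -- right inverse
    intro p hp
    rw [Finset.mem_product] at hp
    obtain ⟨hτ, hρ⟩ := hp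
    rw [Tset, Finset.mem_filter, Finset.mem_powerset] at hτ
    rw [Finset.mem_powerset] at hρ
    have hτin : ∀ e ∈ p.1, ∀ x ∈ e, x ∈ S := fun e he =>
      (Finset.mem_filter.1 (hτ.1 he)).2
    have hρout : ∀ e ∈ p.2, ∀ x ∈ e, x ∉ S := fun e he =>
      (Finset.mem_filter.1 (hρ he)).2
    have h1 : (p.1 ∪ p.2).filter (fun e => ∀ x ∈ e, x ∈ S) = p.1 := by
      apply Finset.ext; intro e
      rw [Finset.mem_filter, Finset.mem_union]
      constructor
      · rintro ⟨h | h, hin⟩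
        · exact h
        · exfalso
          induction e using Sym2.ind with
          | _ a b => exact hρout _ h a (by simp) (hin a (by simp))
      · intro h
        exact ⟨Or.inl h, hτin _ h⟩
    have h2 : (p.1 ∪ p.2).filter (fun e => ∀ x ∈ e, x ∉ S) = p.2 := by
      apply Finset.ext; intro e
      rw [Finset.mem_filter, Finset.mem_union]
      constructor
      · rintro ⟨h | h, hout⟩
        · exfalso
          induction e using Sym2.ind with
          | _ a b => exact hout a (by simp) (hτin _ h a (by simp))
        · exact h
      · intro h
        exact ⟨Or.inr h, hρout _ h⟩
    exact Prod.ext h1 h2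
  · -- values agree
    intro σ hσ
    rw [Finset.mem_filter, Finset.mem_powerset] at hσ
    obtain ⟨hsub, hcomp⟩ := hσ
    have hdisj : Disjoint (σ.filter (fun e => ∀ x ∈ e, x ∈ S))
        (σ.filter (fun e => ∀ x ∈ e, x ∉ S)) := by
      refine Finset.disjoint_left.2 (fun e he he' => ?_)
      rw [Finset.mem_filter] at he he'
      induction e using Sym2.ind with
      | _ a b => exact he'.2 a (by simp) (he.2 a (by simp))
    have hunion : (σ.filter (fun e => ∀ x ∈ e, x ∈ S)) ∪
        (σ.filter (fun e => ∀ x ∈ e, x ∉ S)) = σ := by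
      rw [← Finset.filter_or, Finset.filter_eq_self]
      intro e he
      induction e using Sym2.ind with
      | _ a b =>
        have hne : a ≠ b := by
          have := mem_allE_iff.1 (hsub he)
          simpa [Sym2.isDiag_iff_proj_eq] using this
        by_cases ha : a ∈ S
        · left
          intro x hx
          rcases Sym2.mem_iff.1 hx with rfl | rfl
          · exact ha
          · exact hcomp ▸ comp_no_cross v0 hsub he hne (hcomp ▸ ha)
        · right
          intro x hx hxS
          rcases Sym2.mem_iff.1 hx with rfl | rfl
          · exact ha hxS
          · have hswap : s(x,a) ∈ σ := by rwa [Sym2.eq_swap] at he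
            exact ha (hcomp ▸ comp_no_cross v0 hsub hswap hne.symm (hcomp ▸ hxS))
    have hcard : σ.card = (σ.filter (fun e => ∀ x ∈ e, x ∈ S)).card +
        (σ.filter (fun e => ∀ x ∈ e, x ∉ S)).card := by
      rw [← Finset.card_union_of_disjoint hdisj, hunion]
    dsimp only
    rw [hcard, pow_add]
end Decomp

section Tsum
variable (v0 : V)

lemma image_filter_back {S : Finset V} {τ : Finset (Sym2 V)} (hτ : τ ⊆ Ein S) :
    ((Finset.univ.filter (fun e' : Sym2 ↥S => Sym2.map (Subtype.val) e' ∈ τ)).image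
      (Sym2.map (Subtype.val : ↥S → V))) = τ := by
  apply Finset.ext
  intro e
  constructor
  · intro he
    obtain ⟨e', he', rfl⟩ := Finset.mem_image.1 he
    exact (Finset.mem_filter.1 he').2
  · intro he
    have hin : ∀ x ∈ e, x ∈ S := (Finset.mem_filter.1 (hτ he)).2
    induction e using Sym2.ind with
    | _ a b =>
      refine Finset.mem_image.2 ⟨s(⟨a, hin a (by simp)⟩, ⟨b, hin b (by simp)⟩), ?_, ?_⟩
      · rw [Finset.mem_filter]
        exact ⟨Finset.mem_univ _, by rwa [Sym2.map_pair_eq]⟩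
      · rw [Sym2.map_pair_eq]

lemma tset_sum_eq (S : Finset V) (h0 : v0 ∈ S) :
    ∑ τ ∈ Tset v0 S, (-1 : ℤ) ^ τ.card = csum ↥S := by
  have hval : Function.Injective (Subtype.val : ↥S → V) := Subtype.val_injective
  unfold csum
  refine Finset.sum_nbij'
    (fun τ => Finset.univ.filter (fun e' : Sym2 ↥S => Sym2.map Subtype.val e' ∈ τ))
    (fun τ' => τ'.image (Sym2.map (Subtype.val : ↥S → V))) ?_ ?_ ?_ ?_ ?_
  · intro τ hτ
    rw [Tset, Finset.mem_filter, Finset.mem_powerset] at hτ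
    obtain ⟨hsub, hreach⟩ := hτ
    have himg := image_filter_back (S := S) hsub
    rw [Finset.mem_filter, Finset.mem_powerset]
    constructor
    · intro e' he'
      rw [Finset.mem_filter] at he'
      rw [mem_allE_iff, ← Sym2.isDiag_map hval]
      have hE : Sym2.map Subtype.val e' ∈ Ein S := hsub he'.2
      rw [Ein, Finset.mem_filter] at hE
      exact mem_allE_iff.1 hE.1
    · -- connectedness of the subtype graph
      rw [SimpleGraph.connected_iff]
      refine ⟨?_, ⟨⟨v0, h0⟩⟩⟩
      intro x y
      have hx : (fromEdgeSet (τ : Set (Sym2 V))).Reachable v0 ↑x := hreach ↑x x.2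
      have hy : (fromEdgeSet (τ : Set (Sym2 V))).Reachable v0 ↑y := hreach ↑y y.2
      have hxy : (fromEdgeSet (τ : Set (Sym2 V))).Reachable ↑x ↑y := hx.symm.trans hy
      have := (reach_image hval
        (Finset.univ.filter (fun e' : Sym2 ↥S => Sym2.map Subtype.val e' ∈ τ)) x y)
      rw [himg] at this
      exact this.1 hxy
  · -- backward membership
    intro τ' hτ'
    rw [Finset.mem_filter, Finset.mem_powerset] at hτ'
    obtain ⟨hsub, hconn⟩ := hτ'
    rw [Tset, Finset.mem_filter, Finset.mem_powerset]
    constructor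
    · intro e he
      obtain ⟨e', he', rfl⟩ := Finset.mem_image.1 he
      rw [Ein, Finset.mem_filter, mem_allE_iff, Sym2.isDiag_map hval]
      refine ⟨mem_allE_iff.1 (hsub he'), ?_⟩
      intro x hx
      induction e' using Sym2.ind with
      | _ p q =>
        rw [Sym2.map_pair_eq] at hx
        rcases Sym2.mem_iff.1 hx with rfl | rfl
        · exact p.2
        · exact q.2
    · intro a haS
      have := hconn.preconnected ⟨v0, h0⟩ ⟨a, haS⟩
      have h2 := (reach_image hval τ' ⟨v0, h0⟩ ⟨a, haS⟩).2 this
      exact h2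
  · -- left inverse
    intro τ hτ
    rw [Tset, Finset.mem_filter, Finset.mem_powerset] at hτ
    exact image_filter_back hτ.1
  · -- right inverse
    intro τ' hτ'
    apply Finset.ext
    intro e'
    rw [Finset.mem_filter]
    constructor
    · rintro ⟨-, h⟩
      obtain ⟨x, hx, hxe⟩ := Finset.mem_image.1 h
      rwa [← Sym2.map.injective hval hxe]
    · intro h
      exact ⟨Finset.mem_univ _, Finset.mem_image.2 ⟨e', h, rfl⟩⟩
  · -- cardinalities
    intro τ hτ
    rw [Tset, Finset.mem_filter, Finset.mem_powerset] at hτ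
    have himg := image_filter_back (S := S) hτ.1
    conv_lhs => rw [← himg]
    rw [Finset.card_image_of_injective _ (Sym2.map.injective hval)]
end Tsum

lemma eout_univ_erase (m : V) : Eout ((Finset.univ : Finset V).erase m) = ∅ := by
  rw [Finset.eq_empty_iff_forall_notMem]
  intro e he
  rw [Eout, Finset.mem_filter] at he
  induction e using Sym2.ind with
  | _ a b =>
    have hne : a ≠ b := by
      have := mem_allE_iff.1 he.1
      simpa [Sym2.isDiag_iff_proj_eq] using this
    have ha := he.2 a (by simp)
    have hb := he.2 b (by simp)
    simp only [Finset.mem_erase, Finset.mem_univ, and_true, not_not] at ha hb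
    exact hne (ha.trans hb.symm)

lemma csum_fin_one : csum (Fin 1) = 1 := by
  have hE : allE (Fin 1) = ∅ := by
    rw [Finset.eq_empty_iff_forall_notMem]
    intro e he
    induction e using Sym2.ind with
    | _ a b =>
      exact (mem_allE_iff.1 he) (by simp [Sym2.isDiag_iff_proj_eq, Subsingleton.elim a b])
  have hconn : (fromEdgeSet ((∅ : Finset (Sym2 (Fin 1))) : Set (Sym2 (Fin 1)))).Connected := by
    rw [SimpleGraph.connected_iff]
    exact ⟨fun a b => by rw [Subsingleton.elim a b], ⟨0⟩⟩
  have hbot : (⊥ : SimpleGraph (Fin 1)).Connected := by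
    rw [SimpleGraph.connected_iff]
    exact ⟨fun a b => by rw [Subsingleton.elim a b], ⟨0⟩⟩
  rw [csum, hE]
  rw [Finset.powerset_empty, Finset.filter_singleton]
  simp only [Finset.coe_empty, fromEdgeSet_empty, hbot, if_true, Finset.sum_singleton,
    Finset.card_empty, pow_zero]

lemma csum_recursion (n : ℕ) (hn : 1 ≤ n) :
    csum (Fin (n+1)) = - (n : ℤ) * csum (Fin n) := by
  set V := Fin (n+1)
  have h01 : ((0 : Fin (n+1)) : Fin (n+1)) ≠ (⟨1, by omega⟩ : Fin (n+1)) := by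
    intro h; exact absurd (congrArg Fin.val h) (by simp)
  -- total sum is zero
  have htot : ∑ σ ∈ (allE V).powerset, (-1 : ℤ) ^ σ.card = 0 := by
    apply Finset.sum_powerset_neg_one_pow_card_of_nonempty
    exact ⟨s(0, ⟨1, by omega⟩), mem_allE_iff.2 (by simp [Sym2.isDiag_iff_proj_eq, h01])⟩
  -- fiber decomposition
  have hfib : ∑ S : Finset V, ∑ σ ∈ (allE V).powerset.filter (fun σ => comp 0 σ = S),
      (-1 : ℤ) ^ σ.card = 0 := by
    rw [Finset.sum_fiberwise]; exact htot
  -- evaluate each fiber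
  have heval : ∀ S : Finset V,
      (∑ σ ∈ (allE V).powerset.filter (fun σ => comp 0 σ = S), (-1 : ℤ) ^ σ.card)
        = if 0 ∈ S ∧ Eout S = ∅ then ∑ τ ∈ Tset 0 S, (-1 : ℤ) ^ τ.card else 0 := by
    intro S
    by_cases h0 : (0 : V) ∈ S
    · rw [fiber_eq 0 S h0, Finset.sum_powerset_neg_one_pow_card]
      by_cases hE : Eout S = ∅
      · simp [h0, hE]
      · simp [h0, hE]
    · have : (allE V).powerset.filter (fun σ => comp 0 σ = S) = ∅ := by
        rw [Finset.filter_eq_empty_iff]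
        intro σ _ hcomp
        exact h0 (hcomp ▸ (mem_comp _).2 (Reachable.refl _))
      simp [this, h0]
  have hsum : ∑ S ∈ (Finset.univ : Finset (Finset V)).filter
      (fun S => 0 ∈ S ∧ Eout S = ∅), (∑ τ ∈ Tset 0 S, (-1 : ℤ) ^ τ.card) = 0 := by
    rw [Finset.sum_filter]
    calc ∑ S : Finset V, (if 0 ∈ S ∧ Eout S = ∅ then ∑ τ ∈ Tset 0 S, (-1 : ℤ) ^ τ.card else 0)
        = ∑ S : Finset V, ∑ σ ∈ (allE V).powerset.filter (fun σ => comp 0 σ = S),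
            (-1 : ℤ) ^ σ.card := Finset.sum_congr rfl (fun S _ => (heval S).symm)
      _ = 0 := hfib
  -- identify the qualifying S
  have hq : (Finset.univ : Finset (Finset V)).filter (fun S => 0 ∈ S ∧ Eout S = ∅)
      = insert Finset.univ ((Finset.univ.erase (0 : V)).image
          (fun m => (Finset.univ : Finset V).erase m)) := by
    apply Finset.ext
    intro S
    rw [Finset.mem_filter, Finset.mem_insert, Finset.mem_image]
    constructor
    · rintro ⟨-, h0, hE⟩
      by_cases hu : S = Finset.univ
      · exact Or.inl hu
      · right
        obtain ⟨m, hm⟩ : ∃ m, m ∉ S := by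
          by_contra h
          push_neg at h
          exact hu (Finset.eq_univ_iff_forall.2 h)
        refine ⟨m, Finset.mem_erase.2 ⟨by rintro rfl; exact hm h0, Finset.mem_univ _⟩, ?_⟩
        apply Finset.ext
        intro x
        rw [Finset.mem_erase]
        constructor
        · rintro ⟨hxm, -⟩
          by_contra hxS
          have : s(x, m) ∈ Eout S := by
            rw [mem_Eout]
            refine ⟨mem_allE_iff.2 (by simp [Sym2.isDiag_iff_proj_eq, hxm]), ?_⟩
            intro y hy
            rcases Sym2.mem_iff.1 hy with rfl | rfl
            · exact hxS
            · exact hm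
          rw [hE] at this
          exact absurd this (Finset.notMem_empty _)
        · intro hx
          exact ⟨by rintro rfl; exact hm hx, Finset.mem_univ _⟩
    · rintro (rfl | ⟨m, hm, rfl⟩)
      · refine ⟨Finset.mem_univ _, Finset.mem_univ _, ?_⟩
        rw [Finset.eq_empty_iff_forall_notMem]
        intro e he
        rw [mem_Eout] at he
        induction e using Sym2.ind with
        | _ a b => exact he.2 a (by simp) (Finset.mem_univ a)
      · rw [Finset.mem_erase] at hm
        exact ⟨Finset.mem_univ _,
          Finset.mem_erase.2 ⟨Ne.symm hm.1, Finset.mem_univ _⟩, eout_univ_erase m⟩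
  rw [hq] at hsum
  have hnotmem : (Finset.univ : Finset V) ∉ (Finset.univ.erase (0 : V)).image
      (fun m => (Finset.univ : Finset V).erase m) := by
    rw [Finset.mem_image]
    rintro ⟨m, -, hme⟩
    have := Finset.mem_univ m
    rw [← hme, Finset.mem_erase] at this
    exact this.1 rfl
  rw [Finset.sum_insert hnotmem] at hsum
  -- Tsum over univ is csum (Fin (n+1))
  have huniv : ∑ τ ∈ Tset (0 : V) Finset.univ, (-1 : ℤ) ^ τ.card = csum (Fin (n+1)) := by
    rw [tset_sum_eq 0 Finset.univ (Finset.mem_univ _)]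
    exact csum_equiv (Equiv.subtypeUnivEquiv (fun x => Finset.mem_univ x))
  -- Tsum over univ.erase m is csum (Fin n)
  have herase : ∀ m ∈ Finset.univ.erase (0 : V),
      ∑ τ ∈ Tset (0 : V) (Finset.univ.erase m), (-1 : ℤ) ^ τ.card = csum (Fin n) := by
    intro m hm
    rw [Finset.mem_erase] at hm
    rw [tset_sum_eq 0 (Finset.univ.erase m)
      (Finset.mem_erase.2 ⟨Ne.symm hm.1, Finset.mem_univ _⟩)]
    refine csum_equiv (Fintype.equivFinOfCardEq ?_)
    rw [Fintype.card_coe, Finset.card_erase_of_mem (Finset.mem_univ _), Finset.card_univ,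
      Fintype.card_fin]
    omega
  rw [Finset.sum_image (fun a _ b _ h => by
    by_contra hne
    have ha : a ∈ Finset.univ.erase b := Finset.mem_erase.2 ⟨hne, Finset.mem_univ _⟩
    rw [← h] at ha
    exact (Finset.mem_erase.1 ha).1 rfl)] at hsum
  have hcount : (Finset.univ.erase (0 : V)).card = n := by
    rw [Finset.card_erase_of_mem (Finset.mem_univ _), Finset.card_univ, Fintype.card_fin]
    omega
  rw [Finset.sum_congr rfl herase, huniv, Finset.sum_const, hcount, nsmul_eq_mul] at hsum
  linarith

lemma csum_fin (k : ℕ) (hk : 1 ≤ k) :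
    csum (Fin k) = (-1 : ℤ) ^ (k - 1) * Nat.factorial (k - 1) := by
  induction k with
  | zero => omega
  | succ n ih =>
    cases n with
    | zero => simpa using csum_fin_one
    | succ m =>
      rw [csum_recursion (m+1) (by omega), ih (by omega)]
      rw [show m+1+1-1 = m+1 from rfl, show m+1-1 = m from rfl, pow_succ, Nat.factorial_succ]
      push_cast
      ring

/-- The reduced Euler characteristic of the simplicial complex `M(A)` of
non-connected graphs on a vertex set `A` with `k ≥ 2` elements equals
`(-1)^{k-1} (k-1)!`.  The faces of `M(A)` are the finite sets `σ` of
(non-diagonal) unordered pairs of elements of `A` such that the graph with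
edge set `σ` is not connected; the face `σ` has dimension `|σ| - 1`
(the empty face has dimension `-1`), so the reduced Euler characteristic is
`∑_σ (-1)^{|σ|-1} = - ∑_σ (-1)^{|σ|}`. -/
theorem reduced_euler_char_nonconnected_graphs (k : ℕ) (hk : 2 ≤ k) :
    -(∑ σ ∈ (Finset.univ : Finset (Finset (Sym2 (Fin k)))).filter
        (fun (σ : Finset (Sym2 (Fin k))) => (∀ e ∈ σ, ¬ e.IsDiag) ∧
          ¬ (SimpleGraph.fromEdgeSet (σ : Set (Sym2 (Fin k)))).Connected),
        (-1 : ℤ) ^ σ.card) =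
      (-1) ^ (k - 1) * Nat.factorial (k - 1) := by
  have hset : (Finset.univ : Finset (Finset (Sym2 (Fin k)))).filter
        (fun (σ : Finset (Sym2 (Fin k))) => (∀ e ∈ σ, ¬ e.IsDiag) ∧
          ¬ (SimpleGraph.fromEdgeSet (σ : Set (Sym2 (Fin k)))).Connected)
      = (allE (Fin k)).powerset.filter
          (fun σ : Finset (Sym2 (Fin k)) => ¬ (SimpleGraph.fromEdgeSet (σ : Set (Sym2 (Fin k)))).Connected) := by
    apply Finset.ext
    intro σ
    rw [Finset.mem_filter, Finset.mem_filter, Finset.mem_powerset]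
    constructor
    · rintro ⟨-, hd, hc⟩
      exact ⟨fun e he => mem_allE_iff.2 (hd e he), hc⟩
    · rintro ⟨hsub, hc⟩
      exact ⟨Finset.mem_univ _, fun e he => mem_allE_iff.1 (hsub he), hc⟩
  have hne : (allE (Fin k)).Nonempty := by
    refine ⟨s((⟨0, by omega⟩ : Fin k), (⟨1, by omega⟩ : Fin k)), mem_allE_iff.2 ?_⟩
    simp [Sym2.isDiag_iff_proj_eq]
  have htot := Finset.sum_powerset_neg_one_pow_card_of_nonempty hne
    (α := Sym2 (Fin k))
  have hsplit := Finset.sum_filter_add_sum_filter_not (allE (Fin k)).powerset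
    (fun σ : Finset (Sym2 (Fin k)) => (SimpleGraph.fromEdgeSet (σ : Set (Sym2 (Fin k)))).Connected)
    (fun σ => (-1 : ℤ) ^ σ.card)
  have hcs : ∑ σ ∈ (allE (Fin k)).powerset.filter
      (fun σ : Finset (Sym2 (Fin k)) => (SimpleGraph.fromEdgeSet (σ : Set (Sym2 (Fin k)))).Connected),
      (-1 : ℤ) ^ σ.card = csum (Fin k) := rfl
  rw [hset]
  have := csum_fin k (by omega)
  rw [htot, hcs, this] at hsplit
  linarith
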